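/- Let $1<p<N$, $0\le\mu<\bar\mu=((N-p)/p)^p$ and let $\gamma_1<\gamma_2$ be the nonnegative roots of $\gamma^{p-2}[(p-1)\gamma^2-(N-p)\gamma]+\mu=0$. Then for every $s$ with $\frac{N-p}{p\gamma_2}<s<\frac{N-p}{p\gamma_1}$ (interpreting the upper bound as $+\infty$ if $\gamma_1=0$), one has $\frac{p(s-1)+1}{s^p}>\frac{\mu}{\bar\mu}$. -/

import Mathlib

/-- The root equation `γ^(p-2)[(p-1)γ² - (N-p)γ] + μ = 0`. -/
def rootEq (N p μ γ : ℝ) : Prop :=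
  γ ^ (p - 2) * ((p - 1) * γ ^ 2 - (N - p) * γ) + μ = 0

/-!
For `γ ≥ 0` the root equation says `μ = G(γ)` with `G(t) = (N-p) t^(p-1) - (p-1) t^p`
(`muOfGamma`), and `G(m/s) s^p = (p(s-1)+1) m^p` for `m = (N-p)/p`, so the claim is
`μ < G(m/s)`. Now `G` increases on `[0, m]` and decreases on `[m, ∞)`, hence exceeds its
common value `μ` at `γ₁ < γ₂` strictly between them, and the bounds on `s` say exactly
`γ₁ < m/s < γ₂`.
-/

open Set

theorem StrictMonoOn.apply_lt_of_strictAntiOn {α β : Type*} [LinearOrder α] [Preorder β]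
    {f : α → β} {a m x y t : α} (hinc : StrictMonoOn f (Icc a m))
    (hdec : StrictAntiOn f (Ici m))
    (hax : a ≤ x) (hxt : x < t) (hty : t < y) (hxy : f x = f y) : f x < f t := by
  rcases le_total t m with htm | hmt
  · exact hinc ⟨hax, hxt.le.trans htm⟩ ⟨hax.trans hxt.le, htm⟩ hxt
  · exact hxy ▸ hdec hmt (hmt.trans hty.le) hty

noncomputable def muOfGamma (N p γ : ℝ) : ℝ :=
  (N - p) * γ ^ (p - 1) - (p - 1) * γ ^ p

theorem rootEq_iff_muOfGamma_eq {N p μ γ : ℝ} (hp : 1 < p) (hγ : 0 ≤ γ) :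
    rootEq N p μ γ ↔ muOfGamma N p γ = μ := by
  unfold rootEq muOfGamma
  rcases hγ.eq_or_lt with rfl | hγ
  · simp [Real.zero_rpow (by linarith : p - 1 ≠ 0), Real.zero_rpow (by linarith : p ≠ 0),
      eq_comm]
  · have h₁ : γ ^ (p - 1) = γ ^ (p - 2) * γ := by
      rw [show p - 1 = p - 2 + 1 by ring, Real.rpow_add_one hγ.ne']
    have h₂ : γ ^ p = γ ^ (p - 2) * γ ^ 2 := by
      rw [← Real.rpow_natCast, ← Real.rpow_add hγ]
      norm_num
    rw [h₁, h₂]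
    constructor <;> intro h <;> linear_combination -h

theorem hasDerivAt_muOfGamma (N p : ℝ) {t : ℝ} (ht : 0 < t) :
    HasDerivAt (muOfGamma N p) ((p - 1) * t ^ (p - 2) * ((N - p) - p * t)) t := by
  have h := (((Real.hasDerivAt_rpow_const (p := p - 1) (Or.inl ht.ne')).const_mul (N - p)).sub
    ((Real.hasDerivAt_rpow_const (p := p) (Or.inl ht.ne')).const_mul (p - 1)))
  refine h.congr_deriv ?_
  rw [show p - 1 - 1 = p - 2 by ring, show p - 1 = p - 2 + 1 by ring,
    Real.rpow_add_one ht.ne']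
  ring

theorem continuous_muOfGamma (N : ℝ) {p : ℝ} (hp : 1 ≤ p) : Continuous (muOfGamma N p) := by
  unfold muOfGamma
  have := Real.continuous_rpow_const (sub_nonneg.2 hp)
  have := Real.continuous_rpow_const (zero_le_one.trans hp)
  fun_prop

theorem strictMonoOn_muOfGamma {N p : ℝ} (hp : 1 < p) :
    StrictMonoOn (muOfGamma N p) (Icc 0 ((N - p) / p)) := by
  refine strictMonoOn_of_hasDerivWithinAt_pos (convex_Icc _ _)
    (f' := fun t => (p - 1) * t ^ (p - 2) * ((N - p) - p * t))
    (continuous_muOfGamma N hp.le).continuousOn (fun t ht => ?_) (fun t ht => ?_) <;>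
    rw [interior_Icc] at ht
  · exact (hasDerivAt_muOfGamma N p ht.1).hasDerivWithinAt
  · have hpt : p * t < N - p := (lt_div_iff₀' (by linarith)).1 ht.2
    exact mul_pos (mul_pos (by linarith) (Real.rpow_pos_of_pos ht.1 _)) (by linarith)

theorem strictAntiOn_muOfGamma {N p : ℝ} (hp : 1 < p) (hpN : p < N) :
    StrictAntiOn (muOfGamma N p) (Ici ((N - p) / p)) := by
  have hm : 0 < (N - p) / p := div_pos (by linarith) (by linarith)
  refine strictAntiOn_of_hasDerivWithinAt_neg (convex_Ici _)
    (f' := fun t => (p - 1) * t ^ (p - 2) * ((N - p) - p * t))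
    (continuous_muOfGamma N hp.le).continuousOn (fun t ht => ?_) (fun t ht => ?_) <;>
    rw [interior_Ici] at ht
  · exact (hasDerivAt_muOfGamma N p (hm.trans ht)).hasDerivWithinAt
  · have hpt : N - p < p * t := (div_lt_iff₀' (by linarith)).1 ht
    exact mul_neg_of_pos_of_neg (mul_pos (by linarith) (Real.rpow_pos_of_pos (hm.trans ht) _))
      (by linarith)

theorem muOfGamma_div_mul_rpow {N p s : ℝ} (hp : 0 < p) (hpN : p < N) (hs : 0 < s) :
    muOfGamma N p ((N - p) / p / s) * s ^ p = (p * (s - 1) + 1) * ((N - p) / p) ^ p := by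
  set m := (N - p) / p with hm_def
  have hm : 0 < m := div_pos (by linarith) hp
  have hNp : N - p = p * m := by rw [hm_def]; field_simp
  have hms : m / s * s = m := div_mul_cancel₀ m hs.ne'
  have hs_pow : s ^ p = s ^ (p - 1) * s := by
    rw [← Real.rpow_add_one hs.ne']; norm_num
  have hm_pow : m ^ p = m ^ (p - 1) * m := by
    rw [← Real.rpow_add_one hm.ne']; norm_num
  calc muOfGamma N p (m / s) * s ^ p
      = (N - p) * ((m / s) ^ (p - 1) * s ^ (p - 1)) * s - (p - 1) * ((m / s) ^ p * s ^ p) := by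
        rw [muOfGamma, hs_pow]; ring
    _ = (N - p) * m ^ (p - 1) * s - (p - 1) * m ^ p := by
        rw [← Real.mul_rpow (by positivity) hs.le, ← Real.mul_rpow (by positivity) hs.le, hms]
    _ = (p * (s - 1) + 1) * m ^ p := by
        rw [hm_pow, hNp]; ring

theorem s_interval_ineq (N p μ γ₁ γ₂ : ℝ)
    (hp : 1 < p) (hpN : p < N)
    (hroot₁ : rootEq N p μ γ₁) (hroot₂ : rootEq N p μ γ₂)
    (h₁0 : 0 ≤ γ₁) (h₂ : (N - p) / p < γ₂) :
    ∀ s : ℝ, (N - p) / (p * γ₂) < s → (γ₁ = 0 ∨ s < (N - p) / (p * γ₁)) →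
      (p * (s - 1) + 1) / s ^ p > μ / ((N - p) / p) ^ p := by
  intro s hs₂ hs₁
  have hm : 0 < (N - p) / p := div_pos (by linarith) (by linarith)
  have hγ₂ : 0 < γ₂ := hm.trans h₂
  rw [div_mul_eq_div_div] at hs₂ hs₁
  have hs : 0 < s := (div_pos hm hγ₂).trans hs₂
  have htγ₂ : (N - p) / p / s < γ₂ := (div_lt_comm₀ hγ₂ hs).1 hs₂
  have hγ₁t : γ₁ < (N - p) / p / s := by
    rcases h₁0.eq_or_lt with rfl | hγ₁
    · exact div_pos hm hs
    · exact (lt_div_comm₀ hγ₁ hs).2 (hs₁.resolve_left hγ₁.ne')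
  have hμ₁ := (rootEq_iff_muOfGamma_eq hp h₁0).1 hroot₁
  have hμ₂ := (rootEq_iff_muOfGamma_eq hp hγ₂.le).1 hroot₂
  have key : μ < muOfGamma N p ((N - p) / p / s) :=
    hμ₁ ▸ (strictMonoOn_muOfGamma hp).apply_lt_of_strictAntiOn (strictAntiOn_muOfGamma hp hpN)
      h₁0 hγ₁t htγ₂ (hμ₁.trans hμ₂.symm)
  have hsp : 0 < s ^ p := Real.rpow_pos_of_pos hs p
  rw [gt_iff_lt, div_lt_div_iff₀ (Real.rpow_pos_of_pos hm p) hsp,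
    ← muOfGamma_div_mul_rpow (by linarith) hpN hs]
  exact mul_lt_mul_of_pos_right key hsp
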